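/- arXiv:math/0010143 — 11 statements merged into one kernel-verified Lean document; each statement's English description precedes it below -/
import Mathlib

section
/- For every positive integer n and every choice of positive integers a_1, …, a_n and q_1, …, q_n, the union of the geometric progressions G_i = {a_i · q_i^k : k ∈ ℕ} (i = 1, …, n) does not contain every positive integer; in fact, there exists a prime number that belongs to none of the G_i. -/
/-- For every positive integer `n` and positive integers `a 1, …, a n`, `q 1, …, q n`,
there is a prime that belongs to none of the geometric progressions
`G i = {a i * q i ^ k : k ∈ ℕ}`; in particular their union misses some positive integer. -/
theorem no_finite_cover_by_geometric_progressions
    (n : ℕ) (hn : 0 < n) (a q : Fin n → ℕ)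
    (ha : ∀ i, 0 < a i) (hq : ∀ i, 0 < q i) :
    ∃ p : ℕ, p.Prime ∧ ∀ i : Fin n, ∀ k : ℕ, a i * q i ^ k ≠ p := by
  set N := Finset.univ.sup (fun i : Fin n => max (a i) (q i)) with hN
  obtain ⟨p, hpN, hp⟩ := Nat.exists_infinite_primes (N + 1)
  refine ⟨p, hp, fun i k h => ?_⟩
  have hai : a i ≤ N := le_trans (le_max_left _ _) (Finset.le_sup (f := fun i => max (a i) (q i)) (Finset.mem_univ i))
  have hqi : q i ≤ N := le_trans (le_max_right _ _) (Finset.le_sup (f := fun i => max (a i) (q i)) (Finset.mem_univ i))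
  have hadvd : a i ∣ p := ⟨q i ^ k, h.symm⟩
  rcases (hp.eq_one_or_self_of_dvd _ hadvd) with h1 | h1
  · rw [h1, one_mul] at h
    rcases Nat.eq_zero_or_pos k with rfl | hk
    · simp at h; exact hp.one_lt.ne' h.symm
    · have : q i ∣ p := ⟨q i ^ (k - 1), by rw [← pow_succ', Nat.sub_add_cancel hk, h]⟩
      rcases hp.eq_one_or_self_of_dvd _ this with h2 | h2
      · rw [h2, one_pow] at h; exact hp.one_lt.ne' h.symm
      · omega
  · omega
end

section
/- For every odd integer n ≥ 3, the equation x^n − ⌊x⌋ = n has exactly one real solution: the real number x with x^n = n + 1, and this solution lies in the open interval (1, 2). -/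
lemma two_pow_aux (n : ℕ) (hn : 3 ≤ n) : n + 3 ≤ 2 ^ n := by
  induction n with
  | zero => omega
  | succ m ih =>
    rcases Nat.lt_or_ge m 3 with h | h
    · interval_cases m <;> first | omega | norm_num
    · have h1 := ih h
      have h2 : 2 ^ (m+1) = 2 * 2 ^ m := by ring
      omega

/-- For every odd integer `n ≥ 3`, the equation `x^n - ⌊x⌋ = n` has exactly one
real solution, namely the `x` with `x^n = n + 1`, which lies in `(1, 2)`. -/
theorem odd_floor_equation_unique_solution (n : ℕ) (hn : 3 ≤ n) (ho : Odd n) :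
    ∃ x : ℝ, x ^ n = n + 1 ∧ 1 < x ∧ x < 2 ∧
      ∀ y : ℝ, y ^ n - (⌊y⌋ : ℝ) = n ↔ y = x := by
  have hn0 : n ≠ 0 := by omega
  set x : ℝ := ((n : ℝ) + 1) ^ ((n : ℝ)⁻¹) with hxdef
  have hx0 : (0:ℝ) ≤ x := Real.rpow_nonneg (by positivity) _
  have hx : x ^ n = (n : ℝ) + 1 := by
    rw [hxdef, ← Real.rpow_natCast (((n : ℝ) + 1) ^ ((n : ℝ)⁻¹)) n,
      ← Real.rpow_mul (by positivity), inv_mul_cancel₀ (by exact_mod_cast hn0),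
      Real.rpow_one]
  have hpow : (n : ℝ) + 3 ≤ 2 ^ n := by
    have h := two_pow_aux n hn
    have : ((n + 3 : ℕ) : ℝ) ≤ ((2 ^ n : ℕ) : ℝ) := by exact_mod_cast h
    push_cast at this; linarith
  have hx1 : 1 < x := by
    have h1 : (1:ℝ) ^ n < x ^ n := by
      rw [hx, one_pow]
      have : (3:ℝ) ≤ n := by exact_mod_cast hn
      linarith
    exact lt_of_pow_lt_pow_left₀ n hx0 h1
  have hx2 : x < 2 := by
    have h1 : x ^ n < 2 ^ n := by rw [hx]; linarith
    exact lt_of_pow_lt_pow_left₀ n (by norm_num) h1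
  refine ⟨x, hx, hx1, hx2, fun y => ⟨fun hy => ?_, fun hy => ?_⟩⟩
  · -- uniqueness
    obtain ⟨k, hk⟩ : ∃ k : ℤ, ⌊y⌋ = k := ⟨⌊y⌋, rfl⟩
    rw [hk] at hy
    have hky : (k : ℝ) ≤ y := hk ▸ Int.floor_le y
    have hyk : y < (k : ℝ) + 1 := by rw [← hk]; exact Int.lt_floor_add_one y
    have hyn : y ^ n = (n : ℝ) + k := by linarith
    obtain ⟨m, rfl⟩ : ∃ m, n = m + 1 := ⟨n - 1, by omega⟩
    push_cast at hyn
    obtain h | h | h | h : k ≤ -1 ∨ k = 0 ∨ k = 1 ∨ 2 ≤ k := by omega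
    · exfalso
      -- y negative case
      have hy0 : y < 0 := lt_of_lt_of_le hyk (by exact_mod_cast (by omega : k + 1 ≤ 0))
      have hneg : (-y) ^ (m+1) = -(y ^ (m+1)) := Odd.neg_pow ho y
      set c : ℝ := -(k : ℝ) - 1 with hc
      have hc0 : 0 ≤ c := by
        have : (k:ℝ) ≤ -1 := by exact_mod_cast h
        simp [hc]; linarith
      have hcy : c < -y := by simp [hc]; linarith
      have h1 : c ^ (m+1) < (-y) ^ (m+1) := pow_lt_pow_left₀ hcy hc0 (by omega)
      have h2 : (-y) ^ (m+1) = -((m:ℝ) + 1 + k) := by rw [hneg, hyn]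
      -- so c^(m+1) < -(n+k) = c + 1 - (m+1) - 1 + ... compute: -(n+k) = c - m - ... 
      -- k = -c-1, so n + k = m + 1 - c - 1 = m - c, so -(n+k) = c - m
      have h3 : c ^ (m+1) < c - m := by
        have hcast : -((m:ℝ) + 1 + (k:ℝ)) = c - m := by rw [hc]; ring
        rw [h2, hcast] at h1
        exact h1
      rcases le_or_gt c 1 with hcle | hcgt
      · have : (0:ℝ) ≤ c ^ (m+1) := pow_nonneg hc0 _
        have hm : (2:ℝ) ≤ m := by
          have : 3 ≤ m + 1 := hn; exact_mod_cast (by omega : 2 ≤ m)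
        linarith
      · have : c ≤ c ^ (m+1) := le_self_pow₀ (le_of_lt hcgt) (by omega)
        have hm0 : (0:ℝ) ≤ m := Nat.cast_nonneg m
        linarith
    · exfalso
      subst h
      have hy0 : 0 ≤ y := le_trans (by norm_num) hky
      have hy1 : y < 1 := by simpa using hyk
      have : y ^ (m+1) < 1 := pow_lt_one₀ hy0 hy1 (by omega)
      have hm : (2:ℝ) ≤ m := by exact_mod_cast (by omega : 2 ≤ m)
      rw [hyn] at this
      push_cast at this
      linarith
    · -- k = 1 : y = x
      subst h
      have hy1 : (1:ℝ) ≤ y := by exact_mod_cast hky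
      have heq : y ^ (m+1) = x ^ (m+1) := by rw [hyn, hx]; push_cast; ring
      rcases lt_trichotomy y x with hlt | heq' | hgt
      · exfalso
        have := pow_lt_pow_left₀ hlt (by linarith) (by omega : m + 1 ≠ 0)
        linarith [this, heq.symm ▸ this]
      · exact heq'
      · exfalso
        have := pow_lt_pow_left₀ hgt hx0 (by omega : m + 1 ≠ 0)
        linarith [this, heq ▸ this]
    · exfalso
      have hy2 : (2:ℝ) ≤ y := le_trans (by exact_mod_cast h) hky
      have hy0 : (0:ℝ) < y := by linarith
      have hym : (2:ℝ) ^ m ≤ y ^ m := pow_le_pow_left₀ (by norm_num) hy2 m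
      have h1 : (2:ℝ) ^ m * y ≤ y ^ m * y := mul_le_mul_of_nonneg_right hym (le_of_lt hy0)
      have h2 : y ^ (m+1) = y ^ m * y := pow_succ y m
      have h3 : y ^ (m+1) ≤ (m:ℝ) + 1 + y := by rw [hyn]; push_cast; linarith
      have h4 := hpow
      push_cast at h4
      have h5 : (2:ℝ) ^ (m+1) = 2 * 2 ^ m := by ring
      -- (2^m - 1) * y ≤ m+1, y ≥ 2, 2^m ≥ 1
      nlinarith [h1, h2, h3, h4, h5, hy2, pow_pos (by norm_num : (0:ℝ) < 2) m]
  · subst hy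
    have hf : ⌊x⌋ = 1 := by
      rw [Int.floor_eq_iff]
      constructor <;> push_cast <;> linarith
    rw [hf, hx]
    push_cast
    ring
end

section
/- For every even integer n ≥ 4, the equation x^n − ⌊x⌋ = n has exactly two real solutions: the positive real number x₁ with x₁^n = n + 1 (which lies in (1, 2)) and the negative real number x₂ with x₂^n = n − 2 (which lies in (−2, −1)). -/
private lemma aux_two_pow (n : ℕ) (hn : 4 ≤ n) : (n : ℝ) + 4 ≤ 2 ^ n := by
  induction n, hn using Nat.le_induction with
  | base => norm_num
  | succ m hm ih =>
    push_cast [pow_succ]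
    push_cast at ih
    nlinarith

private lemma pow_inj_aux {a b : ℝ} {n : ℕ} (ha : 0 ≤ a) (hb : 0 ≤ b)
    (hn : n ≠ 0) (h : a ^ n = b ^ n) : a = b := by
  rcases lt_trichotomy a b with hlt | heq | hgt
  · exact absurd h (ne_of_lt (pow_lt_pow_left₀ hlt ha hn))
  · exact heq
  · exact absurd h.symm (ne_of_lt (pow_lt_pow_left₀ hgt hb hn))

/-- For every even integer `n ≥ 4`, the equation `x^n - ⌊x⌋ = n` has exactly two
real solutions: the positive `x₁` with `x₁^n = n + 1` (lying in `(1, 2)`) and the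
negative `x₂` with `x₂^n = n - 2` (lying in `(-2, -1)`). -/
theorem even_floor_equation_two_solutions (n : ℕ) (hn : 4 ≤ n) (he : Even n) :
    ∃ x₁ x₂ : ℝ,
      x₁ ^ n = (n : ℝ) + 1 ∧ 1 < x₁ ∧ x₁ < 2 ∧
      x₂ ^ n = (n : ℝ) - 2 ∧ -2 < x₂ ∧ x₂ < -1 ∧
      ∀ y : ℝ, y ^ n - (⌊y⌋ : ℝ) = n ↔ y = x₁ ∨ y = x₂ := by
  have hn0 : n ≠ 0 := by omega
  have hn4 : (4 : ℝ) ≤ (n : ℝ) := by exact_mod_cast hn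
  have h2pow : (n : ℝ) + 4 ≤ 2 ^ n := aux_two_pow n hn
  set x₁ : ℝ := ((n : ℝ) + 1) ^ ((n : ℝ)⁻¹) with hx₁def
  set z : ℝ := ((n : ℝ) - 2) ^ ((n : ℝ)⁻¹) with hzdef
  have hx₁nn : 0 ≤ x₁ := Real.rpow_nonneg (by linarith) _
  have hznn : 0 ≤ z := Real.rpow_nonneg (by linarith) _
  have hx₁pow : x₁ ^ n = (n : ℝ) + 1 :=
    Real.rpow_inv_natCast_pow (by linarith) hn0
  have hzpow : z ^ n = (n : ℝ) - 2 :=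
    Real.rpow_inv_natCast_pow (by linarith) hn0
  have hx₁gt : 1 < x₁ := by
    by_contra h
    push_neg at h
    have : x₁ ^ n ≤ 1 := pow_le_one₀ hx₁nn h
    rw [hx₁pow] at this; linarith
  have hx₁lt : x₁ < 2 := by
    by_contra h
    push_neg at h
    have : (2 : ℝ) ^ n ≤ x₁ ^ n := pow_le_pow_left₀ (by norm_num) h n
    rw [hx₁pow] at this; linarith
  have hzgt : 1 < z := by
    by_contra h
    push_neg at h
    have : z ^ n ≤ 1 := pow_le_one₀ hznn h
    rw [hzpow] at this; linarith
  have hzlt : z < 2 := by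
    by_contra h
    push_neg at h
    have : (2 : ℝ) ^ n ≤ z ^ n := pow_le_pow_left₀ (by norm_num) h n
    rw [hzpow] at this; linarith
  refine ⟨x₁, -z, hx₁pow, hx₁gt, hx₁lt, ?_, by linarith, by linarith, ?_⟩
  · rw [he.neg_pow, hzpow]
  intro y
  constructor
  · intro hy
    have hfl : (⌊y⌋ : ℝ) ≤ y := Int.floor_le y
    have hfl' : y < (⌊y⌋ : ℝ) + 1 := Int.lt_floor_add_one y
    have hyn : y ^ n = (n : ℝ) + (⌊y⌋ : ℝ) := by linarith
    rcases lt_trichotomy ⌊y⌋ 0 with hk | hk | hk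
    · -- negative floor cases
      rcases lt_trichotomy ⌊y⌋ (-2) with hk2 | hk2 | hk2
      · -- ⌊y⌋ ≤ -3 : contradiction
        exfalso
        have hkle : (⌊y⌋ : ℝ) ≤ -3 := by exact_mod_cast (by omega : ⌊y⌋ ≤ -3)
        have hy2 : 2 < -y := by linarith
        have : (2 : ℝ) ^ n < (-y) ^ n := pow_lt_pow_left₀ hy2 (by norm_num) hn0
        rw [he.neg_pow, hyn] at this
        linarith
      · -- ⌊y⌋ = -2
        right
        have hkr : ((⌊y⌋ : ℤ) : ℝ) = -2 := by rw [hk2]; norm_num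
        have hyy : (-y) ^ n = z ^ n := by
          rw [he.neg_pow, hyn, hzpow, hkr]; ring
        have : -y = z := pow_inj_aux (by rw [hkr] at hfl'; linarith) hznn hn0 hyy
        linarith
      · -- ⌊y⌋ = -1
        exfalso
        have hk1 : ⌊y⌋ = -1 := by omega
        have hkr : ((⌊y⌋ : ℤ) : ℝ) = -1 := by rw [hk1]; norm_num
        have h1 : |y| ≤ 1 := by
          rw [abs_le]; constructor <;> [rw [hkr] at hfl; rw [hkr] at hfl'] <;> linarith
        have : |y| ^ n ≤ 1 := pow_le_one₀ (abs_nonneg y) h1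
        rw [he.pow_abs, hyn, hkr] at this
        linarith
    · -- ⌊y⌋ = 0 : contradiction
      exfalso
      have hkr : ((⌊y⌋ : ℤ) : ℝ) = 0 := by rw [hk]; norm_num
      have h1 : |y| ≤ 1 := by
        rw [abs_le]; constructor <;> [rw [hkr] at hfl; rw [hkr] at hfl'] <;> linarith
      have : |y| ^ n ≤ 1 := pow_le_one₀ (abs_nonneg y) h1
      rw [he.pow_abs, hyn, hkr] at this
      linarith
    · rcases lt_trichotomy ⌊y⌋ 2 with hk2 | hk2 | hk2
      · -- ⌊y⌋ = 1
        left
        have hk1 : ⌊y⌋ = 1 := by omega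
        have hkr : ((⌊y⌋ : ℤ) : ℝ) = 1 := by rw [hk1]; norm_num
        exact pow_inj_aux (by rw [hkr] at hfl; linarith) hx₁nn hn0
          (by rw [hyn, hx₁pow, hkr])
      all_goals
      · -- ⌊y⌋ ≥ 2 : contradiction
        exfalso
        have hkge : (2 : ℝ) ≤ (⌊y⌋ : ℝ) := by
          exact_mod_cast (by omega : (2:ℤ) ≤ ⌊y⌋)
        have hy2 : (2 : ℝ) ≤ y := by linarith
        obtain ⟨m, rfl⟩ : ∃ m, n = m + 1 := ⟨n - 1, by omega⟩
        have h1 : (2 : ℝ) ^ m ≤ y ^ m := pow_le_pow_left₀ (by norm_num) hy2 m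
        have h2 : y ^ (m + 1) = y ^ m * y := pow_succ y m
        have h3 : (2:ℝ) ^ (m+1) = 2 ^ m * 2 := pow_succ 2 m
        nlinarith [hyn, hfl]
  · rintro (rfl | rfl)
    · have : ⌊x₁⌋ = 1 := by
        rw [Int.floor_eq_iff]
        constructor <;> push_cast <;> linarith
      rw [this, hx₁pow]; push_cast; ring
    · have : ⌊(-z : ℝ)⌋ = -2 := by
        rw [Int.floor_eq_iff]
        constructor <;> push_cast <;> linarith
      rw [this, he.neg_pow, hzpow]; push_cast; ring
end

section
/- For every even integer m ≥ 2, the equation 1/x^m − ⌊x⌋ = −m has no real solution x ≠ 0. -/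
/-- For every even integer `m ≥ 2`, the equation `1/x^m - ⌊x⌋ = -m` has no
nonzero real solution. -/
theorem even_negative_exponent_no_solution (m : ℕ) (hm : 2 ≤ m) (he : Even m) :
    ¬ ∃ x : ℝ, x ≠ 0 ∧ 1 / x ^ m - (⌊x⌋ : ℝ) = -(m : ℝ) := by
  rintro ⟨x, hx, heq⟩
  have hpow : (0:ℝ) < x ^ m := he.pow_pos hx
  have hinv : (0:ℝ) < 1 / x ^ m := by positivity
  have hfl : (⌊x⌋ : ℝ) = 1 / x ^ m + m := by linarith
  have hgt : (m : ℝ) < (⌊x⌋ : ℝ) := by linarith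
  have hge : (m : ℤ) + 1 ≤ ⌊x⌋ := by exact_mod_cast hgt
  have hxge : (m : ℝ) + 1 ≤ x := by
    have := Int.floor_le x
    have : ((m:ℤ) + 1 : ℝ) ≤ (⌊x⌋ : ℝ) := by exact_mod_cast hge
    push_cast at this
    linarith [Int.floor_le x]
  have hx1 : (1:ℝ) < x := by
    have : (2:ℝ) ≤ m := by exact_mod_cast hm
    linarith
  have hpow1 : (1:ℝ) < x ^ m := one_lt_pow₀ hx1 (by omega)
  have hinv1 : 1 / x ^ m < 1 := by
    rw [div_lt_one hpow]; exact hpow1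
  have : (⌊x⌋ : ℝ) < m + 1 := by linarith
  have : (⌊x⌋ : ℤ) < m + 1 := by exact_mod_cast this
  omega
end

section
/- For every odd integer m ≥ 3, the equation 1/x^m − ⌊x⌋ = −m has exactly one real solution x ≠ 0, namely the real number x with x^m = −1/(m+1) (i.e. x = −(m+1)^(−1/m), which lies in (−1, 0)). -/
/-- For every odd integer `m ≥ 3`, the equation `1/x^m - ⌊x⌋ = -m` has exactly one
nonzero real solution, namely the real `x` with `x^m = -1/(m+1)`, which lies in
`(-1, 0)`. -/
theorem odd_negative_exponent_unique_solution (m : ℕ) (hm : 3 ≤ m) (ho : Odd m) :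
    ∃ x : ℝ, x ^ m = -(1 / ((m : ℝ) + 1)) ∧ -1 < x ∧ x < 0 ∧
      ∀ y : ℝ, y ≠ 0 → (1 / y ^ m - (⌊y⌋ : ℝ) = -(m : ℝ) ↔ y = x) := by
  have hm3 : (3 : ℝ) ≤ (m : ℝ) := by exact_mod_cast hm
  have hmne : (m : ℝ) ≠ 0 := by linarith
  set b : ℝ := ((m : ℝ) + 1) ^ (-(1 / (m : ℝ)) : ℝ) with hb
  have hb1 : (1 : ℝ) < (m : ℝ) + 1 := by linarith
  have hbpos : 0 < b := Real.rpow_pos_of_pos (by linarith) _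
  have hblt1 : b < 1 := Real.rpow_lt_one_of_one_lt_of_neg hb1 (by
    have : (0 : ℝ) < 1 / m := by positivity
    linarith)
  have hbm : b ^ m = 1 / ((m : ℝ) + 1) := by
    rw [hb, ← Real.rpow_natCast (((m : ℝ) + 1) ^ (-(1 / (m : ℝ)) : ℝ)) m,
      ← Real.rpow_mul (by linarith)]
    have : (-(1 / (m : ℝ))) * (m : ℕ) = -1 := by field_simp
    rw [this, Real.rpow_neg_one]
    simp
  have hxm : (-b) ^ m = -(1 / ((m : ℝ) + 1)) := by rw [ho.neg_pow, hbm]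
  refine ⟨-b, hxm, by linarith, by linarith, ?_⟩
  intro y hy
  constructor
  · intro h
    have hypm : y ^ m ≠ 0 := pow_ne_zero _ hy
    have hinv : (1 / y ^ m) * y ^ m = 1 := by field_simp
    rcases lt_trichotomy y 0 with hyneg | hy0 | hypos
    · -- y < 0
      have hym_neg : y ^ m < 0 := ho.pow_neg hyneg
      by_cases hy1 : y ≤ -1
      · exfalso
        have hle : y ^ m ≤ (-1 : ℝ) ^ m := ho.strictMono_pow.monotone hy1
        rw [ho.neg_pow, one_pow] at hle
        have h1 : -1 ≤ (1 : ℝ) / y ^ m := by nlinarith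
        have hfl : (⌊y⌋ : ℝ) ≤ y := Int.floor_le y
        linarith
      · push_neg at hy1
        have hfloor : ⌊y⌋ = -1 := by
          rw [Int.floor_eq_iff]
          constructor <;> push_cast <;> linarith
        rw [hfloor] at h
        push_cast at h
        have heq : (1 : ℝ) / y ^ m = -((m : ℝ) + 1) := by linarith
        have hmul : (-((m : ℝ) + 1)) * y ^ m = 1 := by rw [← heq]; exact hinv
        have hym2 : y ^ m = -(1 / ((m : ℝ) + 1)) := by
          field_simp
          linear_combination -hmul
        exact ho.strictMono_pow.injective (hym2.trans hxm.symm)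
    · exact absurd hy0 hy
    · -- y > 0 : contradiction
      exfalso
      have hym_pos : 0 < y ^ m := pow_pos hypos m
      have hinvpos : 0 < 1 / y ^ m := by positivity
      have hgt : ((m : ℤ) : ℝ) < (⌊y⌋ : ℝ) := by push_cast; linarith
      have hgtz : (m : ℤ) < ⌊y⌋ := by exact_mod_cast hgt
      have hge : ((m : ℤ) + 1 : ℝ) ≤ (⌊y⌋ : ℝ) := by exact_mod_cast hgtz
      have hfl : (⌊y⌋ : ℝ) ≤ y := Int.floor_le y
      have hy4 : (4 : ℝ) ≤ y := by push_cast at hge; linarith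
      have hypow : y ≤ y ^ m := le_self_pow₀ (by linarith) (by omega)
      have : (1 : ℝ) / y ^ m ≤ 1 / 4 := by
        rw [div_le_div_iff₀ (by linarith) (by norm_num)]
        linarith
      push_cast at hge
      linarith
  · rintro rfl
    have hfloor : ⌊(-b : ℝ)⌋ = -1 := by
      rw [Int.floor_eq_iff]
      constructor <;> push_cast <;> linarith
    rw [hxm, hfloor]
    push_cast
    have h1 : (1 : ℝ) / (-(1 / ((m : ℝ) + 1))) = -((m : ℝ) + 1) := by
      field_simp
    rw [h1]; ring
end

section
/- For every odd integer n ≥ 3, the set of real solutions t of the equation t − ⌊t^n⌋ = 1/n is exactly {1/n, −(n−1)/n}. -/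
/-!
Write `t = k + 1/n` with `k = ⌊t ^ n⌋`; the equation then says exactly that the integer `k`
satisfies `⌊(k + 1/n) ^ n⌋ = k`. Bernoulli's inequality shows that `(k + 1/n) ^ n` overshoots
`k + 1` when `k ≥ 1` and, by oddness of `n`, undershoots `k` when `k ≤ -2`, so only `k = 0`
and `k = -1` remain, and both work since `|k + 1/n| < 1` for them.
-/

lemma sub_floor_pow_eq_iff (n : ℕ) (t c : ℝ) :
    t - ⌊t ^ n⌋ = c ↔ ∃ k : ℤ, t = k + c ∧ ⌊((k : ℝ) + c) ^ n⌋ = k := by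
  constructor
  · intro h
    have ht : t = ⌊t ^ n⌋ + c := by linarith
    exact ⟨⌊t ^ n⌋, ht, by rw [← ht]⟩
  · rintro ⟨k, rfl, hk⟩
    rw [hk]
    ring

lemma add_one_le_pow_add_inv {n : ℕ} (hn : 0 < n) {x : ℝ} (hx : 1 ≤ x) :
    x + 1 ≤ (x + 1 / n) ^ n := by
  have hn1 : (1 : ℝ) ≤ n := by exact_mod_cast hn
  have hinv : (n : ℝ) * (1 / n) = 1 := by field_simp
  have hinv₀ : 0 < 1 / (n : ℝ) := by positivity
  calc x + 1 ≤ 1 + n * (x - 1 + 1 / n) := by nlinarith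
    _ ≤ (1 + (x - 1 + 1 / n)) ^ n := one_add_mul_le_pow (by linarith) n
    _ = (x + 1 / n) ^ n := by ring

lemma lt_pow_sub_inv {n : ℕ} (hn : 3 ≤ n) {y : ℝ} (hy : 2 ≤ y) :
    y < (y - 1 / n) ^ n := by
  have hn3 : (3 : ℝ) ≤ n := by exact_mod_cast hn
  have hinv : (n : ℝ) * (1 / n) = 1 := by field_simp
  have hinv_le : 1 / (n : ℝ) ≤ 1 := by rw [div_le_one] <;> linarith
  calc y < 1 + n * (y - 1 - 1 / n) := by nlinarith
    _ ≤ (1 + (y - 1 - 1 / n)) ^ n := one_add_mul_le_pow (by linarith) n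
    _ = (y - 1 / n) ^ n := by ring

lemma floor_pow_eq_zero {n : ℕ} (hn : n ≠ 0) {a : ℝ} (ha₀ : 0 ≤ a) (ha₁ : a < 1) :
    ⌊a ^ n⌋ = 0 :=
  Int.floor_eq_zero_iff.mpr ⟨pow_nonneg ha₀ n, pow_lt_one₀ ha₀ ha₁ hn⟩

lemma floor_neg_pow_eq_neg_one {n : ℕ} (ho : Odd n) {a : ℝ} (ha₀ : 0 < a) (ha₁ : a < 1) :
    ⌊(-a) ^ n⌋ = -1 := by
  have hpos : 0 < a ^ n := pow_pos ha₀ n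
  have hlt : a ^ n < 1 := pow_lt_one₀ ha₀.le ha₁ (by rintro rfl; simp at ho)
  rw [ho.neg_pow, Int.floor_eq_iff]
  push_cast
  constructor <;> linarith

lemma floor_pow_add_inv_eq_self_iff {n : ℕ} (hn : 3 ≤ n) (ho : Odd n) (k : ℤ) :
    ⌊((k : ℝ) + 1 / n) ^ n⌋ = k ↔ k = 0 ∨ k = -1 := by
  have hn3 : (3 : ℝ) ≤ n := by exact_mod_cast hn
  have hinv₀ : 0 < 1 / (n : ℝ) := by positivity
  have hinv₁ : 1 / (n : ℝ) < 1 := by rw [div_lt_one] <;> linarith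
  constructor
  · intro hk
    have hfloor_le := Int.floor_le (((k : ℝ) + 1 / n) ^ n)
    have hlt_floor := Int.lt_floor_add_one (((k : ℝ) + 1 / n) ^ n)
    rw [hk] at hfloor_le hlt_floor
    by_contra! hk'
    rcases le_or_gt 1 k with hpos | hneg
    · have hover := add_one_le_pow_add_inv (n := n) (by omega) (x := k) (by exact_mod_cast hpos)
      linarith
    · have hk2 : (2 : ℝ) ≤ -k := by exact_mod_cast (by omega : (2 : ℤ) ≤ -k)
      have hunder := lt_pow_sub_inv hn hk2
      rw [show -(k : ℝ) - 1 / n = -(k + 1 / n) by ring, ho.neg_pow] at hunder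
      linarith
  · rintro (rfl | rfl)
    · simpa using floor_pow_eq_zero (by omega) hinv₀.le hinv₁
    · have hfloor := floor_neg_pow_eq_neg_one ho (a := 1 - 1 / n) (by linarith) (by linarith)
      simpa [neg_sub, sub_eq_neg_add] using hfloor

/-- For every odd integer `n ≥ 3`, the real solutions `t` of `t - ⌊t^n⌋ = 1/n`
are exactly `1/n` and `-(n-1)/n`.  (Writing `x = t^n`, this is the equation
`x^(1/n) - ⌊x⌋ = 1/n` with the real `n`-th root.) -/
theorem odd_root_floor_equation_solutions (n : ℕ) (hn : 3 ≤ n) (ho : Odd n) :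
    {t : ℝ | t - (⌊t ^ n⌋ : ℝ) = 1 / n} =
      {1 / (n : ℝ), -(((n : ℝ) - 1) / n)} := by
  have hn₀ : (n : ℝ) ≠ 0 := by positivity
  have hsecond : -(((n : ℝ) - 1) / n) = ((-1 : ℤ) : ℝ) + 1 / n := by
    field_simp
    push_cast
    ring
  ext t
  simp only [Set.mem_ofPred_eq, Set.mem_insert_iff, Set.mem_singleton_iff, hsecond,
    sub_floor_pow_eq_iff, floor_pow_add_inv_eq_self_iff hn ho]
  constructor
  · rintro ⟨k, rfl, rfl | rfl⟩ <;> simp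
  · rintro (rfl | rfl)
    · exact ⟨0, by simp, Or.inl rfl⟩
    · exact ⟨-1, rfl, Or.inr rfl⟩
end

section
/- For every even integer n ≥ 2, the only real number t ≥ 0 satisfying t − ⌊t^n⌋ = 1/n is t = 1/n. -/
/-!
A solution has the form `t = k + 1/n` with `k = ⌊t ^ n⌋ ≥ 0`. If `k ≥ 1`, the Bernoulli-type bound
`(k + 1/n) ^ n ≥ k + n * (1/n) = k + 1` contradicts `t ^ n < k + 1`; hence `k = 0`.
-/

theorem add_mul_le_add_pow {R : Type*} [Field R] [LinearOrder R] [IsStrictOrderedRing R]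
    {a b : R} (ha : 1 ≤ a) (hb : 0 ≤ b) : ∀ {n : ℕ}, n ≠ 0 → a + n * b ≤ (a + b) ^ n
  | 1, _ => by simp
  | n + 2, _ => by
    have ih := add_mul_le_add_pow ha hb n.succ_ne_zero
    calc a + (n + 2 : ℕ) * b ≤ (a + (n + 1 : ℕ) * b) * (a + b) := by
          have hnb : 0 ≤ (n + 1 : ℕ) * b := by positivity
          push_cast at hnb ⊢
          nlinarith [mul_le_mul_of_nonneg_left ha (zero_le_one.trans ha),
            mul_le_mul_of_nonneg_right ha hb, mul_le_mul_of_nonneg_left ha hnb, mul_nonneg hnb hb]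
      _ ≤ (a + b) ^ (n + 2) := by
          rw [pow_succ _ (n + 1)]
          gcongr

theorem floor_pow_eq_zero_of_sub_floor_pow_eq_one_div {n : ℕ} (hn : n ≠ 0) {t : ℝ} (ht : 0 ≤ t)
    (h : t - ⌊t ^ n⌋ = 1 / n) : ⌊t ^ n⌋ = 0 := by
  set k := ⌊t ^ n⌋
  have hk0 : 0 ≤ k := Int.floor_nonneg.2 (by positivity)
  by_contra hk
  have hk1 : (1 : ℝ) ≤ k := by exact_mod_cast (by omega : 1 ≤ k)
  have hlt : t ^ n < k + 1 := Int.lt_floor_add_one _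
  have hle : (k : ℝ) + 1 ≤ t ^ n :=
    calc (k : ℝ) + 1 = k + n * (1 / n) := by field_simp
      _ ≤ (k + 1 / n) ^ n := add_mul_le_add_pow hk1 (by positivity) hn
      _ = t ^ n := by rw [← h, add_sub_cancel]
  linarith

theorem floor_one_div_pow_self_eq_zero {n : ℕ} (hn : 2 ≤ n) : ⌊(1 / n : ℝ) ^ n⌋ = 0 := by
  rw [Int.floor_eq_zero_iff]
  refine ⟨by positivity, pow_lt_one₀ (by positivity) ?_ (by omega)⟩
  rw [div_lt_one (by positivity)]
  exact_mod_cast hn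

theorem even_root_floor_equation_unique_nonneg_solution_general
    (n : ℕ) (hn : 2 ≤ n) :
    ∀ t : ℝ, 0 ≤ t → (t - (⌊t ^ n⌋ : ℝ) = 1 / n ↔ t = 1 / n) := by
  intro t ht
  constructor
  · intro h
    have hfloor := floor_pow_eq_zero_of_sub_floor_pow_eq_one_div (by omega) ht h
    simpa [hfloor] using h
  · rintro rfl
    rw [floor_one_div_pow_self_eq_zero hn, Int.cast_zero, sub_zero]

/-- For every even integer `n ≥ 2`, the only real `t ≥ 0` satisfying
`t - ⌊t^n⌋ = 1/n` is `t = 1/n`. -/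
theorem even_root_floor_equation_unique_nonneg_solution
    (n : ℕ) (hn : 2 ≤ n) (he : Even n) :
    ∀ t : ℝ, 0 ≤ t → (t - (⌊t ^ n⌋ : ℝ) = 1 / n ↔ t = 1 / n) :=
  even_root_floor_equation_unique_nonneg_solution_general n hn
end

section
/- For every odd integer n ≥ 3, the set of nonzero real solutions s of the equation 1/s − ⌊s^n⌋ = −1/n is exactly {−n/(n+1)}; equivalently, the unique real solution of x^(−1/n) − ⌊x⌋ = −1/n is x = −(n/(n+1))^n. -/
/-!
Put `m = ⌊s ^ n⌋`, so that `1 / s = m - 1 / n` with `0 < 1 / n ≤ 1`; since `n` is odd, `s`, `1 / s`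
and `s ^ n` share a sign. If `m ≤ 0` then `s < 0`, hence `m ≤ -1`, hence `1 / s < -1`; so
`-1 < s < 0`, which forces `m = -1` and `s = -n / (n + 1)`. If `m ≥ 2` then `0 < s ≤ 1`, so
`s ^ n ≤ 1`; if `m = 1` then `(1 / s) ^ n = (1 - 1 / n) ^ n ≤ exp (-1) < 1 / 2`, so `s ^ n > 2`.
-/

open Real

lemma one_sub_one_div_pow_lt_half {n : ℕ} (hn : n ≠ 0) : (1 - 1 / (n : ℝ)) ^ n < 1 / 2 :=
  (one_sub_div_pow_le_exp_neg (by exact_mod_cast Nat.one_le_iff_ne_zero.mpr hn)).trans_lt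
    exp_neg_one_lt_half

lemma Int.floor_pow_eq_neg_one_of_odd {n : ℕ} (ho : Odd n) {s : ℝ} (h₁ : -1 < s) (h₀ : s < 0) :
    ⌊s ^ n⌋ = -1 := by
  have hlt : s ^ n < 0 := ho.pow_neg h₀
  have hgt : -1 < s ^ n := by
    rw [← neg_neg s, ho.neg_pow, neg_lt_neg_iff]
    exact pow_lt_one₀ (by linarith) (by linarith) ho.pos.ne'
  rw [Int.floor_eq_iff]
  push_cast
  constructor <;> linarith

section

variable {n : ℕ} {s : ℝ}

lemma floor_pow_eq_neg_one_of_floor_nonpos (ho : Odd n) (h : 1 / s = ⌊s ^ n⌋ - 1 / n)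
    (hm : ⌊s ^ n⌋ ≤ 0) : ⌊s ^ n⌋ = -1 := by
  have hinv_pos : (0 : ℝ) < 1 / n := by simpa using ho.pos
  have hm' : (⌊s ^ n⌋ : ℝ) ≤ 0 := by exact_mod_cast hm
  have hs_neg : s < 0 := one_div_neg.mp (by linarith)
  have hm_neg : ⌊s ^ n⌋ ≤ -1 :=
    Int.le_sub_one_of_lt (Int.floor_lt.mpr (by simpa using ho.pow_neg hs_neg) : ⌊s ^ n⌋ < 0)
  have hm_neg' : (⌊s ^ n⌋ : ℝ) ≤ -1 := by exact_mod_cast hm_neg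
  have hs_gt : -1 < s := by
    have : 1 / s < -1 := by linarith
    rw [div_lt_iff_of_neg hs_neg] at this
    linarith
  exact Int.floor_pow_eq_neg_one_of_odd ho hs_gt hs_neg

lemma floor_pow_nonpos_of_one_div_eq (ho : Odd n) (hs : s ≠ 0)
    (h : 1 / s = ⌊s ^ n⌋ - 1 / n) : ⌊s ^ n⌋ ≤ 0 := by
  by_contra! hm
  have hinv_le : 1 / (n : ℝ) ≤ 1 := by
    rw [div_le_one (by exact_mod_cast ho.pos)]
    exact_mod_cast ho.pos
  have hm' : (1 : ℝ) ≤ ⌊s ^ n⌋ := by exact_mod_cast hm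
  have hs_pos : 0 < s :=
    one_div_pos.mp (lt_of_le_of_ne (by linarith) (by simpa [eq_comm] using hs))
  obtain hm_one | hm_two := eq_or_lt_of_le (show 1 ≤ ⌊s ^ n⌋ from hm)
  · have hlt : s ^ n < 2 := by
      have := Int.lt_floor_add_one (s ^ n)
      rw [← hm_one] at this
      norm_num at this
      exact this
    have hpow : (1 / s) ^ n < 1 / 2 := by
      rw [h, ← hm_one]
      push_cast
      exact one_sub_one_div_pow_lt_half ho.pos.ne'
    rw [one_div_pow, one_div_lt_one_div (by positivity) two_pos] at hpow
    linarith
  · have hm2 : (2 : ℝ) ≤ ⌊s ^ n⌋ := by exact_mod_cast hm_two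
    have hs_le : s ≤ 1 := by
      have : 1 ≤ 1 / s := by linarith
      rwa [le_div_iff₀ hs_pos, one_mul] at this
    linarith [Int.floor_le (s ^ n), pow_le_one₀ hs_pos.le hs_le (n := n)]

end

theorem odd_negative_root_floor_equation_unique_solution_general
    (n : ℕ) (ho : Odd n) :
    {s : ℝ | s ≠ 0 ∧ 1 / s - (⌊s ^ n⌋ : ℝ) = -(1 / n)} =
      {-((n : ℝ) / (n + 1))} := by
  have hn : (0 : ℝ) < n := by exact_mod_cast ho.pos
  ext s
  simp only [Set.mem_ofPred_eq, Set.mem_singleton_iff]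
  constructor
  · rintro ⟨hs, h⟩
    have h' : 1 / s = ⌊s ^ n⌋ - 1 / n := by linarith
    have hm := floor_pow_eq_neg_one_of_floor_nonpos ho h' (floor_pow_nonpos_of_one_div_eq ho hs h')
    rw [hm] at h
    push_cast at h
    field_simp at h ⊢
    linarith
  · rintro rfl
    have hs_lt : (n : ℝ) / (n + 1) < 1 := (div_lt_one (by positivity)).mpr (by linarith)
    refine ⟨neg_ne_zero.mpr (by positivity), ?_⟩
    rw [Int.floor_pow_eq_neg_one_of_odd ho (by linarith) (neg_neg_of_pos (by positivity))]
    field_simp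
    ring

/-- For every odd integer `n ≥ 3`, the nonzero real solutions `s` of
`1/s - ⌊s^n⌋ = -1/n` are exactly `s = -n/(n+1)`; equivalently, the unique real
solution of `x^(-1/n) - ⌊x⌋ = -1/n` is `x = -(n/(n+1))^n`. -/
theorem odd_negative_root_floor_equation_unique_solution
    (n : ℕ) (hn : 3 ≤ n) (ho : Odd n) :
    {s : ℝ | s ≠ 0 ∧ 1 / s - (⌊s ^ n⌋ : ℝ) = -(1 / n)} =
      {-((n : ℝ) / (n + 1))} :=
  odd_negative_root_floor_equation_unique_solution_general n ho
end

section
/- For every even integer n ≥ 2, there is no real number s > 0 satisfying 1/s − ⌊s^n⌋ = −1/n. -/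
/-- For every even integer `n ≥ 2`, there is no real `s > 0` satisfying
`1/s - ⌊s^n⌋ = -1/n`. -/
theorem even_negative_root_floor_equation_no_solution
    (n : ℕ) (hn : 2 ≤ n) (he : Even n) :
    ¬ ∃ s : ℝ, 0 < s ∧ 1 / s - (⌊s ^ n⌋ : ℝ) = -(1 / n) := by
  rintro ⟨s, hs, heq⟩
  have hn0 : (0:ℝ) < n := by positivity
  have hn2 : (2:ℝ) ≤ n := by exact_mod_cast hn
  set m := ⌊s ^ n⌋ with hm
  have hfl : (m:ℝ) ≤ s ^ n := Int.floor_le _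
  have hfl' : s ^ n < m + 1 := Int.lt_floor_add_one _
  have h1 : 1 / s = m - 1 / n := by linarith
  have hspos : 0 < 1 / s := by positivity
  have hninv : 1 / (n:ℝ) ≤ 1 / 2 := by
    apply one_div_le_one_div_of_le <;> linarith
  have hmpos : (0:ℝ) < m := by
    have : (0:ℝ) < 1 / n := by positivity
    linarith
  have hm1 : (1:ℤ) ≤ m := by exact_mod_cast hmpos
  rcases eq_or_lt_of_le hm1 with hm1' | hm2
  · -- m = 1
    have hmr : (m:ℝ) = 1 := by exact_mod_cast hm1'.symm
    rw [hmr] at h1 hfl'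
    have hn1 : (0:ℝ) < (n:ℝ) - 1 := by linarith
    have hseq : s = 1 + 1 / ((n:ℝ) - 1) := by
      have hs0 : s ≠ 0 := ne_of_gt hs
      field_simp at h1 ⊢
      nlinarith [h1]
    have hb : 1 + (n:ℝ) * (1 / ((n:ℝ) - 1)) ≤ (1 + 1 / ((n:ℝ) - 1)) ^ n := by
      apply one_add_mul_le_pow
      have : (0:ℝ) < 1 / ((n:ℝ) - 1) := by positivity
      linarith
    have h2 : (2:ℝ) < 1 + (n:ℝ) * (1 / ((n:ℝ) - 1)) := by
      have : (1:ℝ) < (n:ℝ) * (1 / ((n:ℝ) - 1)) := by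
        rw [mul_one_div, lt_div_iff₀ hn1]; linarith
      linarith
    rw [hseq] at hfl'
    linarith
  · -- m ≥ 2
    have hm2' : (2:ℝ) ≤ m := by exact_mod_cast hm2
    have hsinv : (3:ℝ)/2 ≤ 1 / s := by linarith
    have hslt : s < 1 := by
      by_contra h
      push_neg at h
      have : 1 / s ≤ 1 := by
        rw [div_le_one hs]; linarith
      linarith
    have : s ^ n < 1 := pow_lt_one₀ (le_of_lt hs) hslt (by omega)
    linarith
end

section
/- Let r > 0 and 0 < d ≤ 2r be real numbers, and let n = ⌊π / arcsin(d/(2r))⌋. Then there exists a set of n points on the circle {p ∈ ℝ² : ‖p‖ = r} such that the distance between any two distinct points of the set is at least d. -/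
/-!
Place `n = ⌊π / α⌋₊` points, `α = arcsin (d / (2r))`, at the vertices of a regular `n`-gon
inscribed in the circle. Two vertices `k - j` steps apart are at distance `2r |sin (π (k - j) / n)|`,
and `sin` is at least `sin (π / n)` on `[π / n, π - π / n]`, so every chord is at least
`2r sin (π / n)`. Since `α ≤ π / n ≤ π / 2`, this is at least `2r sin α = d`.
-/

open Real

namespace Real

theorem sin_le_sin_of_le_of_le_pi_sub {u v : ℝ} (hu : 0 ≤ u) (huv : u ≤ v) (hv : v ≤ π - u) :
    sin u ≤ sin v := by
  rcases le_or_gt v (π / 2) with h | h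
  · exact sin_le_sin_of_le_of_le_pi_div_two (by linarith) h huv
  · rw [← sin_pi_sub v]
    exact sin_le_sin_of_le_of_le_pi_div_two (by linarith) (by linarith) (by linarith)

theorem sin_pi_div_le_sin_pi_mul_div {n : ℕ} {x : ℝ} (hx : 1 ≤ x) (hxn : x ≤ n - 1) :
    sin (π / n) ≤ sin (π * x / n) := by
  have hn : (0 : ℝ) < n := by linarith
  apply sin_le_sin_of_le_of_le_pi_sub (by positivity)
  · exact div_le_div_of_nonneg_right (le_mul_of_one_le_right pi_pos.le hx) hn.le
  · calc π * x / n ≤ π * (n - 1) / n := by gcongr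
      _ = π - π / n := by field_simp

theorem sin_le_sin_pi_div_floor_pi_div {α : ℝ} (hα : 0 < α) (hα' : α ≤ π / 2) :
    sin α ≤ sin (π / ⌊π / α⌋₊) := by
  set n := ⌊π / α⌋₊
  have hn : (2 : ℝ) ≤ n := by
    rw [← Nat.cast_ofNat, Nat.cast_le]
    exact Nat.le_floor (by rw [le_div_iff₀ hα]; push_cast; linarith)
  have hαn : α ≤ π / n := by
    rw [le_div_iff₀ (by positivity), mul_comm, ← le_div_iff₀ hα]
    exact Nat.floor_le (by positivity)
  refine sin_le_sin_of_le_of_le_pi_div_two (by linarith) ?_ hαn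
  exact div_le_div_of_nonneg_left pi_pos.le (by norm_num) hn

end Real

namespace Complex

theorem dist_ofReal_mul_exp_mul_I (r a b : ℝ) (hr : 0 ≤ r) :
    dist (r * exp (a * I)) (r * exp (b * I)) = 2 * r * |Real.sin ((a - b) / 2)| := by
  have hexp : exp (a * I) = exp (b * I) * exp (I * (a - b : ℝ)) := by
    rw [← exp_add]; push_cast; ring_nf
  rw [dist_eq, hexp, ← mul_sub, mul_assoc, ← mul_sub_one, norm_mul, norm_mul,
    norm_exp_ofReal_mul_I, norm_exp_I_mul_ofReal_sub_one, norm_real, Real.norm_of_nonneg hr,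
    Real.norm_eq_abs, abs_mul, abs_two]
  ring

noncomputable def regularPolygonVertex (r : ℝ) (n k : ℕ) : ℂ :=
  r * exp ((2 * π * k / n : ℝ) * I)

theorem norm_regularPolygonVertex {r : ℝ} (hr : 0 ≤ r) (n k : ℕ) :
    ‖regularPolygonVertex r n k‖ = r := by
  rw [regularPolygonVertex, norm_mul, norm_exp_ofReal_mul_I, norm_real, Real.norm_of_nonneg hr,
    mul_one]

theorem le_dist_regularPolygonVertex {r : ℝ} (hr : 0 ≤ r) {n j k : ℕ} (hj : j < n) (hk : k < n)
    (hjk : j ≠ k) :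
    2 * r * Real.sin (π / n) ≤ dist (regularPolygonVertex r n j) (regularPolygonVertex r n k) := by
  wlog hlt : j < k generalizing j k
  · rw [dist_comm]
    exact this hk hj hjk.symm (by omega)
  have hn : (0 : ℝ) < n := Nat.cast_pos.2 (by omega)
  have hangle : (2 * π * j / n - 2 * π * k / n) / 2 = -(π * ((k : ℝ) - j) / n) := by
    field_simp; ring
  rw [regularPolygonVertex, regularPolygonVertex, dist_ofReal_mul_exp_mul_I _ _ _ hr, hangle,
    Real.sin_neg, abs_neg]
  gcongr
  refine (Real.sin_pi_div_le_sin_pi_mul_div ?_ ?_).trans (le_abs_self _)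
  · have : (j : ℝ) + 1 ≤ k := by exact_mod_cast hlt
    linarith
  · have : (k : ℝ) + 1 ≤ n := by exact_mod_cast hk
    linarith

open Classical in
noncomputable def regularPolygon (r : ℝ) (n : ℕ) : Finset ℂ :=
  (Finset.range n).image (regularPolygonVertex r n)

theorem norm_of_mem_regularPolygon {r : ℝ} (hr : 0 ≤ r) {n : ℕ} {z : ℂ}
    (hz : z ∈ regularPolygon r n) : ‖z‖ = r := by
  obtain ⟨k, -, rfl⟩ := Finset.mem_image.1 hz
  exact norm_regularPolygonVertex hr n k

theorem le_dist_of_mem_regularPolygon {r : ℝ} (hr : 0 ≤ r) {n : ℕ} {z w : ℂ}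
    (hz : z ∈ regularPolygon r n) (hw : w ∈ regularPolygon r n) (hzw : z ≠ w) :
    2 * r * Real.sin (π / n) ≤ dist z w := by
  obtain ⟨j, hj, rfl⟩ := Finset.mem_image.1 hz
  obtain ⟨k, hk, rfl⟩ := Finset.mem_image.1 hw
  exact le_dist_regularPolygonVertex hr (Finset.mem_range.1 hj) (Finset.mem_range.1 hk)
    fun h => hzw (h ▸ rfl)

theorem card_regularPolygon {r : ℝ} (hr : 0 < r) (n : ℕ) : (regularPolygon r n).card = n := by
  rw [regularPolygon, Finset.card_image_of_injOn, Finset.card_range]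
  intro j hj k hk hjk
  by_contra hne
  have hj : j < n := Finset.mem_range.1 hj
  have hk : k < n := Finset.mem_range.1 hk
  have hsin : 0 < Real.sin (π / n) := by
    have hn : (2 : ℝ) ≤ n := by exact_mod_cast (show 2 ≤ n by omega)
    apply Real.sin_pos_of_pos_of_lt_pi (by positivity)
    exact div_lt_self pi_pos (by linarith)
  have := le_dist_regularPolygonVertex hr.le hj hk hne
  rw [hjk, dist_self] at this
  linarith [mul_pos (mul_pos two_pos hr) hsin]

end Complex

theorem exists_points_on_circle_with_min_distance_general
    (r d : ℝ) (hd : 0 < d) (hdr : d ≤ 2 * r) :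
    ∃ S : Finset (EuclideanSpace ℝ (Fin 2)),
      (S.card : ℤ) = ⌊π / arcsin (d / (2 * r))⌋ ∧
      (∀ p ∈ S, ‖p‖ = r) ∧
      ∀ p ∈ S, ∀ q ∈ S, p ≠ q → d ≤ dist p q := by
  have hr : 0 < r := by linarith
  set α := arcsin (d / (2 * r))
  have hx : 0 < d / (2 * r) := by positivity
  have hα : 0 < α := arcsin_pos.2 hx
  have hsin : sin α = d / (2 * r) := sin_arcsin (by linarith) ((div_le_one (by linarith)).2 hdr)
  set n := ⌊π / α⌋₊
  have hd_le : d ≤ 2 * r * sin (π / n) := by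
    calc d = 2 * r * sin α := by rw [hsin]; field_simp
      _ ≤ 2 * r * sin (π / n) := by
        gcongr; exact sin_le_sin_pi_div_floor_pi_div hα (arcsin_le_pi_div_two _)
  let e := Complex.orthonormalBasisOneI.repr
  refine ⟨(Complex.regularPolygon r n).map e.toEquiv.toEmbedding, ?_, ?_, ?_⟩
  · rw [Finset.card_map, Complex.card_regularPolygon hr]
    exact Int.natCast_floor_eq_floor (by positivity)
  · simp only [Finset.forall_mem_map]
    intro z hz
    exact (e.norm_map z).trans (Complex.norm_of_mem_regularPolygon hr.le hz)
  · simp only [Finset.forall_mem_map]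
    intro z hz w hw hzw
    change d ≤ dist (e z) (e w)
    rw [e.dist_map]
    exact hd_le.trans (Complex.le_dist_of_mem_regularPolygon hr.le hz hw fun h => hzw (h ▸ rfl))

/-- For `0 < d ≤ 2r`, there is a set of `⌊π / arcsin (d / (2r))⌋` points on the
circle of radius `r` centered at the origin of the Euclidean plane such that any
two distinct points of the set are at distance at least `d`. -/
theorem exists_points_on_circle_with_min_distance
    (r d : ℝ) (hr : 0 < r) (hd : 0 < d) (hdr : d ≤ 2 * r) :
    ∃ S : Finset (EuclideanSpace ℝ (Fin 2)),
      (S.card : ℤ) = ⌊π / arcsin (d / (2 * r))⌋ ∧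
      (∀ p ∈ S, ‖p‖ = r) ∧
      ∀ p ∈ S, ∀ q ∈ S, p ≠ q → d ≤ dist p q :=
  exists_points_on_circle_with_min_distance_general r d hd hdr
end

section
/- Let ℓ₁, ℓ₂ > 0 be real numbers, and consider the open parallelogram P = {s·(1,0) + t·(1/2, √3/2) : 0 < s < ℓ₁, 0 < t < ℓ₂} ⊆ ℝ² (a parallelogram with an angle of π/3 and side lengths ℓ₁ and ℓ₂). Then there exists a set of ⌈ℓ₁⌉ · ⌈ℓ₂⌉ points contained in P such that the distance between any two distinct points of the set is at least 1. -/
open Real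

private lemma int_quad_one_le {x y : ℤ} (h : ¬(x = 0 ∧ y = 0)) :
    1 ≤ x ^ 2 + x * y + y ^ 2 := by
  rcases eq_or_ne y 0 with hy | hy
  · subst hy
    have hx : x ≠ 0 := by tauto
    have h1 : 1 ≤ x ^ 2 := by rcases hx.lt_or_gt with h | h <;> nlinarith
    nlinarith
  · have h1 : 1 ≤ y ^ 2 := by rcases hy.lt_or_gt with h | h <;> nlinarith
    nlinarith [sq_nonneg (2 * x + y)]

set_option maxHeartbeats 1000000

/-- In the open parallelogram with side lengths `ℓ₁, ℓ₂` and an angle of `π/3`,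
spanned by the unit vectors `(1,0)` and `(1/2, √3/2)`, there is a set of
`⌈ℓ₁⌉ * ⌈ℓ₂⌉` points whose pairwise distances are all at least `1`. -/
theorem exists_points_in_parallelogram_with_min_distance
    (ℓ₁ ℓ₂ : ℝ) (h₁ : 0 < ℓ₁) (h₂ : 0 < ℓ₂) :
    ∃ S : Finset (EuclideanSpace ℝ (Fin 2)),
      (S.card : ℤ) = ⌈ℓ₁⌉ * ⌈ℓ₂⌉ ∧
      (∀ p ∈ S, ∃ s t : ℝ, 0 < s ∧ s < ℓ₁ ∧ 0 < t ∧ t < ℓ₂ ∧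
        p = s • ((WithLp.equiv 2 (Fin 2 → ℝ)).symm ![1, 0]) +
            t • ((WithLp.equiv 2 (Fin 2 → ℝ)).symm ![1 / 2, Real.sqrt 3 / 2])) ∧
      ∀ p ∈ S, ∀ q ∈ S, p ≠ q → 1 ≤ dist p q := by
  classical
  set v₁ : EuclideanSpace ℝ (Fin 2) := (WithLp.equiv 2 (Fin 2 → ℝ)).symm ![1, 0] with hv₁
  set v₂ : EuclideanSpace ℝ (Fin 2) :=
    (WithLp.equiv 2 (Fin 2 → ℝ)).symm ![1 / 2, Real.sqrt 3 / 2] with hv₂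
  set n₁ : ℕ := ⌈ℓ₁⌉.toNat with hn₁
  set n₂ : ℕ := ⌈ℓ₂⌉.toNat with hn₂
  have hc₁ : (0 : ℤ) < ⌈ℓ₁⌉ := Int.ceil_pos.2 h₁
  have hc₂ : (0 : ℤ) < ⌈ℓ₂⌉ := Int.ceil_pos.2 h₂
  have hn₁c : (n₁ : ℝ) = (⌈ℓ₁⌉ : ℝ) := by
    rw [hn₁]; exact_mod_cast congrArg (fun z : ℤ => (z : ℝ)) (Int.toNat_of_nonneg hc₁.le)
  have hn₂c : (n₂ : ℝ) = (⌈ℓ₂⌉ : ℝ) := by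
    rw [hn₂]; exact_mod_cast congrArg (fun z : ℤ => (z : ℝ)) (Int.toNat_of_nonneg hc₂.le)
  have hle₁ : ℓ₁ ≤ (n₁ : ℝ) := by rw [hn₁c]; exact Int.le_ceil ℓ₁
  have hle₂ : ℓ₂ ≤ (n₂ : ℝ) := by rw [hn₂c]; exact Int.le_ceil ℓ₂
  have hlt₁ : (n₁ : ℝ) - 1 < ℓ₁ := by
    rw [hn₁c]; have := Int.ceil_lt_add_one ℓ₁; linarith
  have hlt₂ : (n₂ : ℝ) - 1 < ℓ₂ := by
    rw [hn₂c]; have := Int.ceil_lt_add_one ℓ₂; linarith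
  set a : ℝ := (ℓ₁ - ((n₁ : ℝ) - 1)) / 2 with ha
  set b : ℝ := (ℓ₂ - ((n₂ : ℝ) - 1)) / 2 with hb
  have hapos : 0 < a := by rw [ha]; linarith
  have hbpos : 0 < b := by rw [hb]; linarith
  set f : ℕ × ℕ → EuclideanSpace ℝ (Fin 2) :=
    fun ij => (a + (ij.1 : ℝ)) • v₁ + (b + (ij.2 : ℝ)) • v₂ with hf
  -- coordinates of f
  have hcoord0 : ∀ ij : ℕ × ℕ,
      (f ij) 0 = (a + (ij.1 : ℝ)) + (b + (ij.2 : ℝ)) * (1 / 2) := by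
    intro ij
    show (a + (ij.1 : ℝ)) * (![1, (0:ℝ)] 0) + (b + (ij.2 : ℝ)) * (![1 / 2, Real.sqrt 3 / 2] 0)
        = _
    simp
  have hcoord1 : ∀ ij : ℕ × ℕ,
      (f ij) 1 = (b + (ij.2 : ℝ)) * (Real.sqrt 3 / 2) := by
    intro ij
    show (a + (ij.1 : ℝ)) * (![1, (0:ℝ)] 1) + (b + (ij.2 : ℝ)) * (![1 / 2, Real.sqrt 3 / 2] 1)
        = _
    simp
  -- key distance bound
  have key : ∀ ij kl : ℕ × ℕ, ij ≠ kl → 1 ≤ dist (f ij) (f kl) := by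
    intro ij kl hne
    set x : ℤ := (ij.1 : ℤ) - (kl.1 : ℤ) with hx
    set y : ℤ := (ij.2 : ℤ) - (kl.2 : ℤ) with hy
    have hxy : ¬(x = 0 ∧ y = 0) := by
      rintro ⟨hx0, hy0⟩
      apply hne
      rw [hx] at hx0; rw [hy] at hy0
      have : ij.1 = kl.1 := by omega
      have : ij.2 = kl.2 := by omega
      exact Prod.ext (by omega) (by omega)
    have hq : (1 : ℤ) ≤ x ^ 2 + x * y + y ^ 2 := int_quad_one_le hxy
    have hqr : (1 : ℝ) ≤ (x : ℝ) ^ 2 + (x : ℝ) * (y : ℝ) + (y : ℝ) ^ 2 := by exact_mod_cast hq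
    have hdsq : dist (f ij) (f kl) ^ 2
        = (x : ℝ) ^ 2 + (x : ℝ) * (y : ℝ) + (y : ℝ) ^ 2 := by
      have h3 : Real.sqrt 3 ^ 2 = 3 := Real.sq_sqrt (by norm_num)
      rw [EuclideanSpace.dist_eq, Real.sq_sqrt (by positivity)]
      rw [Fin.sum_univ_two, hcoord0, hcoord0, hcoord1, hcoord1]
      have hxr : ((ij.1 : ℝ) - (kl.1 : ℝ)) = (x : ℝ) := by rw [hx]; push_cast; ring
      have hyr : ((ij.2 : ℝ) - (kl.2 : ℝ)) = (y : ℝ) := by rw [hy]; push_cast; ring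
      rw [Real.dist_eq, Real.dist_eq, sq_abs, sq_abs]
      have e0 : a + (ij.1 : ℝ) + (b + (ij.2 : ℝ)) * (1 / 2)
          - (a + (kl.1 : ℝ) + (b + (kl.2 : ℝ)) * (1 / 2)) = (x : ℝ) + (y : ℝ) / 2 := by
        rw [← hxr, ← hyr]; ring
      have e1 : (b + (ij.2 : ℝ)) * (Real.sqrt 3 / 2) - (b + (kl.2 : ℝ)) * (Real.sqrt 3 / 2)
          = (y : ℝ) * (Real.sqrt 3 / 2) := by
        rw [← hyr]; ring
      rw [e0, e1]
      linear_combination ((y : ℝ) ^ 2 / 4) * h3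
    nlinarith [dist_nonneg (x := f ij) (y := f kl), hdsq, hqr]
  -- injectivity
  have hinj : Set.InjOn f ↑(Finset.range n₁ ×ˢ Finset.range n₂) := by
    intro p _ q _ hpq
    by_contra hne
    have := key p q hne
    rw [hpq, dist_self] at this
    linarith
  refine ⟨Finset.image f (Finset.range n₁ ×ˢ Finset.range n₂), ?_, ?_, ?_⟩
  · rw [Finset.card_image_of_injOn hinj, Finset.card_product, Finset.card_range,
      Finset.card_range]
    push_cast
    rw [hn₁, hn₂, Int.toNat_of_nonneg hc₁.le, Int.toNat_of_nonneg hc₂.le]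
  · intro p hp
    simp only [Finset.mem_image, Finset.mem_product, Finset.mem_range] at hp
    obtain ⟨⟨i, j⟩, ⟨hi, hj⟩, rfl⟩ := hp
    refine ⟨a + i, b + j, ?_, ?_, ?_, ?_, rfl⟩
    · positivity
    · have : (i : ℝ) ≤ (n₁ : ℝ) - 1 := by
        have : (i : ℝ) + 1 ≤ (n₁ : ℝ) := by exact_mod_cast Nat.succ_le_of_lt hi
        linarith
      rw [ha]; linarith
    · positivity
    · have : (j : ℝ) ≤ (n₂ : ℝ) - 1 := by
        have : (j : ℝ) + 1 ≤ (n₂ : ℝ) := by exact_mod_cast Nat.succ_le_of_lt hj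
        linarith
      rw [hb]; linarith
  · intro p hp q hq hpq
    simp only [Finset.mem_image] at hp hq
    obtain ⟨ij, _, rfl⟩ := hp
    obtain ⟨kl, _, rfl⟩ := hq
    exact key ij kl (fun h => hpq (by rw [h]))
end
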